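/- arXiv:1506.06111 — 2 statements merged into one kernel-verified Lean document; each statement's English description precedes it below -/
import Mathlib

section
/- With 𝒟 as in the previous statement, if β(ζ) = c₁(1,i)ᵀ e^{+θK(ζ)} + c₂(1,−i)ᵀ e^{−θK(ζ)} with θ = ϑ_♯/(|λ_♯||𝔷|) > 0 and K(ζ) = ∫₀^ζ κ(s) ds is an L²(R; C²) solution of 𝒟β = 0, then c₁ = 0; i.e., the L² kernel of 𝒟 is one-dimensional, spanned by (1,−i)ᵀ e^{−θK(ζ)}. -/
open Matrix MeasureTheory Filter

/-- The Pauli matrix `σ₁ = [[0,1],[1,0]]`. -/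
noncomputable def sigma1 : Matrix (Fin 2) (Fin 2) ℂ := !![0, 1; 1, 0]

/-- The Pauli matrix `σ₃ = [[1,0],[0,−1]]`. -/
noncomputable def sigma3 : Matrix (Fin 2) (Fin 2) ℂ := !![1, 0; 0, -1]

/-!
Since `κ → κ∞ > 0`, the primitive `K` tends to `+∞`, so for `θ ≥ 0` the `(1, i)`-component
`c₁ e^{θK}` of `β` has modulus at least `|c₁|` on a half-line. A function whose norm stays
above a positive constant on a half-line is not in `L²`, hence `c₁ = 0`.
-/

theorem MeasureTheory.MemLp.le_zero_of_eventually_le_norm {E : Type*} [NormedAddCommGroup E]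
    {p : ENNReal} {f : ℝ → E} (hf : MemLp f p volume) (hp₀ : p ≠ 0) (hp : p ≠ ⊤) {ε : ℝ}
    (hε : ∀ᶠ x in atTop, ε ≤ ‖f x‖) : ε ≤ 0 := by
  by_contra! hε₀
  obtain ⟨M, hM⟩ := eventually_atTop.mp hε
  have hconst : MemLp (fun _ ↦ ε) p (volume.restrict (Set.Ici M)) := by
    refine (hf.restrict _).of_le aestronglyMeasurable_const ?_
    filter_upwards [ae_restrict_mem measurableSet_Ici] with x hx
    simpa [abs_of_pos hε₀] using hM x hx
  rcases (memLp_const_iff hp₀ hp).mp hconst with h | h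
  · exact hε₀.ne' h
  · simp at h

theorem tendsto_intervalIntegral_atTop_of_eventually_le {f : ℝ → ℝ} (hf : LocallyIntegrable f)
    {c : ℝ} (hc : 0 < c) (hfc : ∀ᶠ x in atTop, c ≤ f x) (a : ℝ) :
    Tendsto (fun x ↦ ∫ t in a..x, f t) atTop atTop := by
  have hf' (a b : ℝ) : IntervalIntegrable f volume a b := intervalIntegrable_iff.mpr <|
    (hf.integrableOn_isCompact isCompact_uIcc).mono_set Set.uIoc_subset_uIcc
  obtain ⟨A, hA⟩ := eventually_atTop.mp hfc
  have hlinear : Tendsto (fun x ↦ c * x + ((∫ t in a..A, f t) - c * A)) atTop atTop :=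
    (tendsto_id.const_mul_atTop hc).atTop_add tendsto_const_nhds
  refine tendsto_atTop_mono' _ ?_ hlinear
  filter_upwards [eventually_ge_atTop A] with x hx
  have hsplit := intervalIntegral.integral_add_adjacent_intervals (hf' a A) (hf' A x)
  have hlower : ∫ _ in A..x, c ≤ ∫ t in A..x, f t :=
    intervalIntegral.integral_mono_on hx intervalIntegrable_const (hf' A x)
      fun t ht ↦ hA t ht.1
  rw [intervalIntegral.integral_const, smul_eq_mul] at hlower
  linarith

theorem norm_mul_abs_le_norm_smul_add_smul (c₁ c₂ : ℂ) (x y : ℝ) :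
    ‖c₁‖ * |x| ≤ ‖c₁ • (x • ![1, Complex.I]) + c₂ • (y • ![1, -Complex.I])‖ := by
  set v := c₁ • (x • ![1, Complex.I]) + c₂ • (y • ![1, -Complex.I])
  -- `(1, i)` and `(1, -i)` are orthogonal, so `v 0 - i v 1` isolates the `(1, i)` component.
  have hproj : v 0 - Complex.I * v 1 = 2 * x * c₁ := by
    simp only [v, Pi.add_apply, Pi.smul_apply, Matrix.cons_val_zero, Matrix.cons_val_one,
      Complex.real_smul, smul_eq_mul]
    ring_nf
    simp only [Complex.I_sq]
    ring
  have hnorm : ‖v 0 - Complex.I * v 1‖ ≤ 2 * ‖v‖ := by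
    calc ‖v 0 - Complex.I * v 1‖ ≤ ‖v 0‖ + ‖v 1‖ := by
          simpa using norm_sub_le (v 0) (Complex.I * v 1)
      _ ≤ 2 * ‖v‖ := by linarith [norm_le_pi_norm v 0, norm_le_pi_norm v 1]
  rw [hproj, norm_mul, norm_mul, Complex.norm_real, Real.norm_eq_abs] at hnorm
  norm_num at hnorm
  linarith

theorem dirac_kernel_coefficient_vanishes_general
    (lamSharp fz : ℂ)
    (ϑ : ℝ) (hϑ : 0 < ϑ)
    (κ : ℝ → ℝ) (hκcont : Continuous κ)
    (κinf : ℝ) (hκinf : 0 < κinf)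
    (htop : Tendsto κ atTop (nhds κinf))
    (c₁ c₂ : ℂ) :
    let θ : ℝ := ϑ / (‖lamSharp‖ * ‖fz‖)
    let K : ℝ → ℝ := fun ζ => ∫ s in (0:ℝ)..ζ, κ s
    let β : ℝ → (Fin 2 → ℂ) := fun ζ =>
      c₁ • (Real.exp (θ * K ζ) • ![1, Complex.I])
        + c₂ • (Real.exp (-(θ * K ζ)) • ![1, -Complex.I])
    (∀ ζ : ℝ,
      (-Complex.I * ((‖lamSharp‖ * ‖fz‖ : ℝ) : ℂ)) •
          sigma3.mulVec (deriv β ζ)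
        + ((ϑ * κ ζ : ℝ) : ℂ) • sigma1.mulVec (β ζ) = 0) →
    MemLp β 2 volume → c₁ = 0 := by
  intro θ K β _ hL2
  have hθ : 0 ≤ θ := by positivity
  have hK : Tendsto K atTop atTop :=
    tendsto_intervalIntegral_atTop_of_eventually_le hκcont.locallyIntegrable (half_pos hκinf)
      (htop.eventually (eventually_ge_nhds (half_lt_self hκinf))) 0
  have hβ : ∀ᶠ ζ in atTop, ‖c₁‖ ≤ ‖β ζ‖ := by
    filter_upwards [hK.eventually_ge_atTop 0] with ζ hζ
    calc ‖c₁‖ ≤ ‖c₁‖ * |Real.exp (θ * K ζ)| := by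
          rw [abs_of_pos (Real.exp_pos _)]
          exact le_mul_of_one_le_right (norm_nonneg _) (Real.one_le_exp (mul_nonneg hθ hζ))
      _ ≤ ‖β ζ‖ := norm_mul_abs_le_norm_smul_add_smul _ _ _ _
  exact norm_le_zero_iff.mp
    (hL2.le_zero_of_eventually_le_norm two_ne_zero ENNReal.ofNat_ne_top hβ)

/-- with `𝒟α = −i|λ♯||𝔷| σ₃ α' + ϑ♯ κ σ₁ α` as before (`λ♯ ≠ 0`, `ϑ♯ > 0`,
`𝔷 ≠ 0`, `κ` continuous with `κ → ±κ∞`, `κ∞ > 0`), if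
`β(ζ) = c₁(1,i)ᵀ e^{θK(ζ)} + c₂(1,−i)ᵀ e^{−θK(ζ)}` with `θ = ϑ♯/(|λ♯||𝔷|)` and
`K(ζ) = ∫₀^ζ κ`, is an `L²(ℝ; ℂ²)` solution of `𝒟β = 0`, then `c₁ = 0`;
i.e. the `L²` kernel of `𝒟` is spanned by `(1,−i)ᵀ e^{−θK}`. -/
theorem dirac_kernel_coefficient_vanishes
    (lamSharp fz : ℂ) (hlam : lamSharp ≠ 0) (hfz : fz ≠ 0)
    (ϑ : ℝ) (hϑ : 0 < ϑ)
    (κ : ℝ → ℝ) (hκcont : Continuous κ)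
    (κinf : ℝ) (hκinf : 0 < κinf)
    (htop : Tendsto κ atTop (nhds κinf))
    (hbot : Tendsto κ atBot (nhds (-κinf)))
    (c₁ c₂ : ℂ) :
    let θ : ℝ := ϑ / (‖lamSharp‖ * ‖fz‖)
    let K : ℝ → ℝ := fun ζ => ∫ s in (0:ℝ)..ζ, κ s
    let β : ℝ → (Fin 2 → ℂ) := fun ζ =>
      c₁ • (Real.exp (θ * K ζ) • ![1, Complex.I])
        + c₂ • (Real.exp (-(θ * K ζ)) • ![1, -Complex.I])
    (∀ ζ : ℝ,
      (-Complex.I * ((‖lamSharp‖ * ‖fz‖ : ℝ) : ℂ)) •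
          sigma3.mulVec (deriv β ζ)
        + ((ϑ * κ ζ : ℝ) : ℂ) • sigma1.mulVec (β ζ) = 0) →
    MemLp β 2 volume → c₁ = 0 :=
  dirac_kernel_coefficient_vanishes_general lamSharp fz ϑ hϑ κ hκcont κinf hκinf htop c₁ c₂
end

section
/- For each λ ∈ R, the 2×2 matrix ℳ(E, λ) = [[E + O₁(λ²), −conj(λ♯)·λ·𝔷 + O₂(λ²)], [−λ♯·λ·conj(𝔷) + O₃(λ²), E + O₄(λ²)]], where |Oⱼ(λ²)| ≤ Cλ² and λ♯ ≠ 0, 𝔷 ≠ 0, is singular for exactly two values E = E_±(λ) satisfying E_±(λ) = ±|λ♯||𝔷|·λ + O(λ²) as λ → 0. In particular the leading-order eigenvalue splitting is linear in λ with slope ±|λ♯||𝔷|. -/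
/-!
The determinant is the quadratic `E² + (O₁ + O₄) E + O₁ O₄ - b c` in `E`, whose roots are
`(-(O₁ + O₄) ± s) / 2` with `s² = (O₁ - O₄)² + 4 b c`. The leading part of `b c` is
`(|λ♯| |𝔷| λ)²`, so `s² = (2 |λ♯| |𝔷| λ)² + O(|λ|³)`. Taking the square root `s` on the side of
`m = 2 |λ♯| |𝔷| λ`, the factorisation `s² - m² = (s - m)(s + m)` with `|s + m| ≥ |m|` gives
`s = m + O(λ²)`; in particular `s ≠ 0`, so the two roots are distinct, for small `λ ≠ 0`.
-/

open Matrix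

theorem exists_sq_eq_and_norm_sub_mul_le (D m : ℂ) :
    ∃ s : ℂ, s ^ 2 = D ∧ ‖s - m‖ * ‖m‖ ≤ ‖D - m ^ 2‖ := by
  obtain ⟨r, hr⟩ := IsAlgClosed.exists_pow_nat_eq D two_pos
  -- of the two roots, the one with `0 ≤ re (s * conj m)` satisfies `‖m‖ ≤ ‖s + m‖`
  obtain ⟨s, hs, hsm⟩ : ∃ s : ℂ, s ^ 2 = D ∧ 0 ≤ (s * (starRingEnd ℂ) m).re := by
    rcases le_total 0 (r * (starRingEnd ℂ) m).re with h | h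
    · exact ⟨r, hr, h⟩
    · exact ⟨-r, by rw [neg_sq, hr], by simp only [neg_mul, Complex.neg_re]; linarith⟩
  have hm : ‖m‖ ≤ ‖s + m‖ := by
    rw [← sq_le_sq₀ (norm_nonneg _) (norm_nonneg _), ← Complex.normSq_eq_norm_sq,
      ← Complex.normSq_eq_norm_sq, Complex.normSq_add]
    nlinarith [Complex.normSq_nonneg s]
  refine ⟨s, hs, ?_⟩
  calc ‖s - m‖ * ‖m‖ ≤ ‖s - m‖ * ‖s + m‖ := by gcongr
    _ = ‖D - m ^ 2‖ := by rw [← norm_mul, ← hs]; ring_nf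

theorem det_add_diag_eq_zero_iff {K : Type*} [Field K] [NeZero (2 : K)] {p q b c s : K}
    (hs : s ^ 2 = (p - q) ^ 2 + 4 * (b * c)) (E : K) :
    !![E + p, b; c, E + q].det = 0 ↔ E = (-(p + q) + s) / 2 ∨ E = (-(p + q) - s) / 2 := by
  have hdet : !![E + p, b; c, E + q].det = 1 * (E * E) + (p + q) * E + (p * q - b * c) := by
    rw [det_fin_two_of]; ring
  have hdiscrim : discrim 1 (p + q) (p * q - b * c) = s * s := by
    rw [discrim]; linear_combination -hs
  rw [hdet, quadratic_eq_zero_iff one_ne_zero hdiscrim E, mul_one]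

theorem norm_add_mul_add_sub_mul_le {R : Type*} [NormedRing R] (x y u v : R) :
    ‖(x + u) * (y + v) - x * y‖ ≤ ‖x‖ * ‖v‖ + ‖u‖ * ‖y‖ + ‖u‖ * ‖v‖ := by
  rw [show (x + u) * (y + v) - x * y = x * v + u * y + u * v by noncomm_ring]
  refine norm_add₃_le.trans ?_
  gcongr <;> exact norm_mul_le _ _

theorem norm_perturbed_discr_sub_le {p q x y u v : ℂ} {r δ : ℝ} (hx : ‖x‖ ≤ r) (hy : ‖y‖ ≤ r)
    (hp : ‖p‖ ≤ δ) (hq : ‖q‖ ≤ δ) (hu : ‖u‖ ≤ δ) (hv : ‖v‖ ≤ δ) :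
    ‖(p - q) ^ 2 + 4 * ((x + u) * (y + v)) - 4 * (x * y)‖ ≤ 8 * δ * (r + δ) := by
  have hδ : 0 ≤ δ := (norm_nonneg p).trans hp
  have hr : 0 ≤ r := (norm_nonneg x).trans hx
  have hpq : ‖p - q‖ ≤ 2 * δ := (norm_sub_le p q).trans (by linarith)
  calc ‖(p - q) ^ 2 + 4 * ((x + u) * (y + v)) - 4 * (x * y)‖
      = ‖(p - q) ^ 2 + 4 * ((x + u) * (y + v) - x * y)‖ := by ring_nf
    _ ≤ ‖p - q‖ ^ 2 + 4 * ‖(x + u) * (y + v) - x * y‖ := by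
      refine (norm_add_le _ _).trans ?_
      rw [norm_pow, norm_mul, Complex.norm_ofNat]
    _ ≤ (2 * δ) ^ 2 + 4 * (r * δ + δ * r + δ * δ) := by
      gcongr
      exact (norm_add_mul_add_sub_mul_le x y u v).trans (by gcongr)
    _ = 8 * δ * (r + δ) := by ring

theorem neg_conj_mul_mul_neg_mul_conj (ℓ z : ℂ) (t : ℝ) :
    (-(starRingEnd ℂ ℓ) * t * z) * (-ℓ * t * starRingEnd ℂ z) =
      ((‖ℓ‖ * ‖z‖ * t : ℝ) : ℂ) ^ 2 := by
  push_cast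
  linear_combination (t : ℂ) ^ 2 * (ℓ * starRingEnd ℂ ℓ) * Complex.mul_conj' z +
    (t : ℂ) ^ 2 * (‖z‖ : ℂ) ^ 2 * Complex.mul_conj' ℓ

theorem norm_neg_conj_mul_ofReal_mul (ℓ z : ℂ) (t : ℝ) :
    ‖-(starRingEnd ℂ ℓ) * t * z‖ = ‖ℓ‖ * ‖z‖ * |t| := by
  simp only [norm_mul, norm_neg, Complex.norm_conj, Complex.norm_real, Real.norm_eq_abs]; ring

theorem norm_neg_mul_ofReal_mul_conj (ℓ z : ℂ) (t : ℝ) :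
    ‖-ℓ * t * starRingEnd ℂ z‖ = ‖ℓ‖ * ‖z‖ * |t| := by
  simp only [norm_mul, norm_neg, Complex.norm_conj, Complex.norm_real, Real.norm_eq_abs]; ring

theorem norm_sqrt_discr_sub_le {p q x y u v s : ℂ} {a C t : ℝ} (ha : 0 < a) (ht : 0 < |t|)
    (ht1 : |t| ≤ 1) (hx : ‖x‖ = a * |t|) (hy : ‖y‖ = a * |t|)
    (hxy : x * y = ((a * t : ℝ) : ℂ) ^ 2)
    (hp : ‖p‖ ≤ C * t ^ 2) (hq : ‖q‖ ≤ C * t ^ 2) (hu : ‖u‖ ≤ C * t ^ 2) (hv : ‖v‖ ≤ C * t ^ 2)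
    (hs : ‖s - ((2 * a * t : ℝ) : ℂ)‖ * ‖((2 * a * t : ℝ) : ℂ)‖ ≤
      ‖(p - q) ^ 2 + 4 * ((x + u) * (y + v)) - ((2 * a * t : ℝ) : ℂ) ^ 2‖) :
    ‖s - ((2 * a * t : ℝ) : ℂ)‖ ≤ 4 * C * (a + C) / a * t ^ 2 := by
  have hm : ‖((2 * a * t : ℝ) : ℂ)‖ = 2 * a * |t| := by
    rw [Complex.norm_real, Real.norm_eq_abs, abs_mul, abs_of_pos (by positivity : 0 < 2 * a)]
  have hm_sq : ((2 * a * t : ℝ) : ℂ) ^ 2 = 4 * (x * y) := by rw [hxy]; push_cast; ring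
  rw [hm, hm_sq] at hs
  have hC : 0 ≤ C := nonneg_of_mul_nonneg_left ((norm_nonneg p).trans hp)
    (by rw [← sq_abs]; exact pow_pos ht 2)
  have htt : t ^ 2 ≤ |t| := by rw [← sq_abs]; nlinarith [abs_nonneg t]
  refine le_of_mul_le_mul_right ?_ (mul_pos (by positivity : 0 < 2 * a) ht)
  calc ‖s - ((2 * a * t : ℝ) : ℂ)‖ * (2 * a * |t|)
      ≤ 8 * (C * t ^ 2) * (a * |t| + C * t ^ 2) :=
        hs.trans (norm_perturbed_discr_sub_le hx.le hy.le hp hq hu hv)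
    _ ≤ 8 * (C * t ^ 2) * ((a + C) * |t|) := by gcongr; nlinarith
    _ = 4 * C * (a + C) / a * t ^ 2 * (2 * a * |t|) := by field_simp; ring

theorem norm_neg_add_add_div_two_le (p q e : ℂ) :
    ‖(-(p + q) + e) / 2‖ ≤ (‖p‖ + ‖q‖ + ‖e‖) / 2 := by
  rw [norm_div, Complex.norm_two]
  gcongr
  exact (norm_add_le _ _).trans (by rw [norm_neg]; gcongr; exact norm_add_le p q)

/-- for `λ♯ ≠ 0`, `𝔷 ≠ 0`, and functions `O₁,…,O₄` with `|Oⱼ(λ)| ≤ Cλ²`,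
the 2×2 matrix
`ℳ(E, λ) = [[E + O₁(λ), −conj(λ♯) λ 𝔷 + O₂(λ)], [−λ♯ λ conj(𝔷) + O₃(λ), E + O₄(λ)]]`
is, for each small `λ ≠ 0`, singular for exactly two values `E = E₊(λ), E₋(λ)` which
satisfy `E_±(λ) = ±|λ♯||𝔷| λ + O(λ²)` as `λ → 0`. -/
theorem two_by_two_eigenvalue_splitting
    (lamSharp fz : ℂ) (hlam : lamSharp ≠ 0) (hfz : fz ≠ 0)
    (C : ℝ) (hC : 0 < C)
    (O₁ O₂ O₃ O₄ : ℝ → ℂ)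
    (hO₁ : ∀ t : ℝ, ‖O₁ t‖ ≤ C * t ^ 2)
    (hO₂ : ∀ t : ℝ, ‖O₂ t‖ ≤ C * t ^ 2)
    (hO₃ : ∀ t : ℝ, ‖O₃ t‖ ≤ C * t ^ 2)
    (hO₄ : ∀ t : ℝ, ‖O₄ t‖ ≤ C * t ^ 2) :
    ∃ ε > 0, ∃ C' > 0, ∃ Ep Em : ℝ → ℂ, ∀ t : ℝ, 0 < |t| → |t| < ε →
      Ep t ≠ Em t ∧
      (∀ E : ℂ,
        (!![E + O₁ t, -(starRingEnd ℂ lamSharp) * (t : ℂ) * fz + O₂ t;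
           -lamSharp * (t : ℂ) * (starRingEnd ℂ fz) + O₃ t, E + O₄ t]).det = 0 ↔
          E = Ep t ∨ E = Em t) ∧
      ‖Ep t - ((‖lamSharp‖ * ‖fz‖ * t : ℝ) : ℂ)‖ ≤ C' * t ^ 2 ∧
      ‖Em t + ((‖lamSharp‖ * ‖fz‖ * t : ℝ) : ℂ)‖ ≤ C' * t ^ 2 := by
  set a : ℝ := ‖lamSharp‖ * ‖fz‖
  have ha : 0 < a := mul_pos (norm_pos_iff.mpr hlam) (norm_pos_iff.mpr hfz)
  set K : ℝ := 4 * C * (a + C) / a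
  have hK : 0 < K := by positivity
  choose s hs_sq hs_le using fun t : ℝ => exists_sq_eq_and_norm_sub_mul_le
    ((O₁ t - O₄ t) ^ 2 + 4 * ((-(starRingEnd ℂ lamSharp) * t * fz + O₂ t) *
      (-lamSharp * t * starRingEnd ℂ fz + O₃ t))) ((2 * a * t : ℝ) : ℂ)
  refine ⟨min 1 (2 * a / K), by positivity, C + K / 2, by positivity,
    fun t => (-(O₁ t + O₄ t) + s t) / 2, fun t => (-(O₁ t + O₄ t) - s t) / 2,
    fun t ht htε => ?_⟩
  have hs : ‖s t - ((2 * a * t : ℝ) : ℂ)‖ ≤ K * t ^ 2 :=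
    norm_sqrt_discr_sub_le ha ht (htε.le.trans (min_le_left _ _))
      (norm_neg_conj_mul_ofReal_mul _ _ _) (norm_neg_mul_ofReal_mul_conj _ _ _)
      (neg_conj_mul_mul_neg_mul_conj _ _ _) (hO₁ t) (hO₄ t) (hO₂ t) (hO₃ t) (hs_le t)
  have hpq : ‖O₁ t‖ + ‖O₄ t‖ ≤ 2 * C * t ^ 2 := by linarith [hO₁ t, hO₄ t]
  refine ⟨fun h => ?_, det_add_diag_eq_zero_iff (hs_sq t), ?_, ?_⟩
  · have htK : K * |t| < 2 * a := (lt_div_iff₀' hK).mp (htε.trans_le (min_le_right _ _))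
    rw [show s t = 0 by linear_combination h, zero_sub, norm_neg, Complex.norm_real,
      Real.norm_eq_abs, abs_mul, abs_of_pos (by positivity : 0 < 2 * a)] at hs
    nlinarith [sq_abs t]
  · calc ‖(-(O₁ t + O₄ t) + s t) / 2 - ((a * t : ℝ) : ℂ)‖
        = ‖(-(O₁ t + O₄ t) + (s t - ((2 * a * t : ℝ) : ℂ))) / 2‖ := by push_cast; ring_nf
      _ ≤ (C + K / 2) * t ^ 2 := (norm_neg_add_add_div_two_le _ _ _).trans (by linarith)
  · calc ‖(-(O₁ t + O₄ t) - s t) / 2 + ((a * t : ℝ) : ℂ)‖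
        = ‖(-(O₁ t + O₄ t) + -(s t - ((2 * a * t : ℝ) : ℂ))) / 2‖ := by push_cast; ring_nf
      _ ≤ (C + K / 2) * t ^ 2 := by
        refine (norm_neg_add_add_div_two_le _ _ _).trans ?_
        rw [norm_neg]; linarith
end
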